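/- For the two-block multilayer SBM with true labeling z and uniform prior Π on all labelings [N] → {1,2}, and any integer r ≥ 0, the expected posterior mass outside the ball of absolute classification error r satisfies Err_z(r) ≤ 2 Σ_{r < k ≤ N/2} C(N,k) exp(−(1/2) I_T (N−k) k), where C(N,k) is the binomial coefficient and I_T = Σ_t I(p_t,q_t). -/

import Mathlib

/-- The set of unordered pairs `{i,j} ⊆ [N]`, encoded as ordered pairs with `i < j`. -/
abbrev PairIdx (N : ℕ) := {e : Fin N × Fin N // e.1 < e.2}

/-- Bernoulli density with mean `θ`. -/
def bern (θ : ℝ) (x : Bool) : ℝ := if x then θ else 1 - θ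

/-- Density of the two-block multilayer SBM with labeling `z`. -/
def sbmDensity {N T : ℕ} (z : Fin N → Fin 2) (p q : Fin T → ℝ)
    (X : PairIdx N → Fin T → Bool) : ℝ :=
  ∏ e : PairIdx N, ∏ t : Fin T,
    bern (if z e.1.1 = z e.1.2 then p t else q t) (X e t)

/-- Hamming distance between two labelings. -/
def hamming {N K : ℕ} (z w : Fin N → Fin K) : ℕ :=
  (Finset.univ.filter (fun i : Fin N => z i ≠ w i)).card

/-- Absolute classification error: Hamming distance up to swapping the two labels. -/
def dACE {N : ℕ} (w z : Fin N → Fin 2) : ℕ :=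
  min (hamming w z) (hamming w (fun i => Equiv.swap (0 : Fin 2) 1 (z i)))

/-- Twice the Rényi divergence of order 1/2 between `Ber(p)` and `Ber(q)`. -/
noncomputable def renyiBer (p q : ℝ) : ℝ :=
  -2 * Real.log (Real.sqrt (1 - p) * Real.sqrt (1 - q) + Real.sqrt p * Real.sqrt q)

/-!
Weighting the posterior of `w` by the likelihood of the data under `z`, the normalising sum
dominates both `Π(z) P_z(X)` and `Π(w) P_w(X)`, so each labeling `w` contributes at most
`√(Π(w)/Π(z))` times the Bhattacharyya affinity `∑_X √(P_z(X) P_w(X))`. The likelihood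
factorises over pairs and layers, so the affinity is a product of Bernoulli affinities: a pair on
which `z` and `w` agree about being in the same block contributes `1`, any other pair
`exp(-I_T/2)`. Exactly `d (N - d)` pairs disagree, where `d = d_ACE(w, z)`, and at most
`2 C(N, d)` labelings have a given `d`.
-/

open Finset

lemma mul_div_le_sqrt_div_mul_sqrt {a b u v D : ℝ} (ha : 0 ≤ a) (hb : 0 ≤ b) (hu : 0 < u)
    (hv : 0 ≤ v) (hua : u * a ≤ D) (hvb : v * b ≤ D) :
    a * (v * b) / D ≤ √(v / u) * √(a * b) := by
  obtain rfl | hD := (show 0 ≤ D by linarith [mul_nonneg hu.le ha]).eq_or_lt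
  · rw [div_zero]
    positivity
  have hsplit : a * (v * b) = √(v / u) * √(a * b) * √(u * a * (v * b)) := by
    rw [← Real.sqrt_mul (by positivity), ← Real.sqrt_mul (by positivity),
      show v / u * (a * b) * (u * a * (v * b)) = (a * (v * b)) ^ 2 by field_simp,
      Real.sqrt_sq (by positivity)]
  have hgeom : √(u * a * (v * b)) ≤ D := by
    calc √(u * a * (v * b)) ≤ √(D * D) :=
          Real.sqrt_le_sqrt (mul_le_mul hua hvb (by positivity) hD.le)
      _ = D := Real.sqrt_mul_self hD.le
  rw [div_le_iff₀ hD, hsplit]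
  gcongr

theorem sum_mul_posterior_le {Ω Θ : Type*} [Fintype Ω] [Fintype Θ] (P : Θ → Ω → ℝ)
    (prior : Θ → ℝ) (hP : ∀ θ x, 0 ≤ P θ x) (hprior : ∀ θ, 0 ≤ prior θ) {z : Θ}
    (hz : 0 < prior z) (S : Finset Θ) :
    ∑ x, P z x * ((∑ w ∈ S, prior w * P w x) / ∑ w, prior w * P w x) ≤
      ∑ w ∈ S, √(prior w / prior z) * ∑ x, √(P z x * P w x) := by
  have hdom : ∀ x θ, prior θ * P θ x ≤ ∑ w, prior w * P w x := fun x θ =>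
    single_le_sum (fun w _ => mul_nonneg (hprior w) (hP w x)) (mem_univ θ)
  simp_rw [sum_div, mul_sum]
  rw [sum_comm]
  refine sum_le_sum fun w _ => sum_le_sum fun x _ => ?_
  rw [← mul_div_assoc]
  exact mul_div_le_sqrt_div_mul_sqrt (hP z x) (hP w x) hz (hprior w) (hdom x z) (hdom x w)

lemma sum_prod_prod_eq_prod_prod_sum {R ι κ α : Type*} [CommSemiring R] [Fintype ι]
    [DecidableEq ι] [Fintype κ] [DecidableEq κ] [Fintype α] (f : ι → κ → α → R) :
    ∑ X : ι → κ → α, ∏ i, ∏ j, f i j (X i j) = ∏ i, ∏ j, ∑ a, f i j a := by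
  simp_rw [Fintype.prod_sum]

lemma bern_nonneg {θ : ℝ} (h0 : 0 ≤ θ) (h1 : θ ≤ 1) (x : Bool) : 0 ≤ bern θ x := by
  cases x <;> simp [bern, h0, h1]

lemma bern_ite_nonneg (P : Prop) [Decidable P] {p q : ℝ} (hp : 0 < p ∧ p < 1)
    (hq : 0 < q ∧ q < 1) (x : Bool) : 0 ≤ bern (if P then p else q) x := by
  split_ifs
  exacts [bern_nonneg hp.1.le hp.2.le x, bern_nonneg hq.1.le hq.2.le x]

lemma sum_sqrt_bern_mul_bern {a b : ℝ} (h0 : 0 ≤ a) (h1 : a ≤ 1) :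
    ∑ x, √(bern a x * bern b x) = √(1 - a) * √(1 - b) + √a * √b := by
  simp [bern, Real.sqrt_mul h0, Real.sqrt_mul (sub_nonneg.2 h1), add_comm]

lemma sum_sqrt_bern_mul_self {a : ℝ} (h0 : 0 ≤ a) (h1 : a ≤ 1) :
    ∑ x, √(bern a x * bern a x) = 1 := by
  rw [sum_sqrt_bern_mul_bern h0 h1, Real.mul_self_sqrt (sub_nonneg.2 h1),
    Real.mul_self_sqrt h0, sub_add_cancel]

lemma exp_neg_half_renyiBer {p q : ℝ} (hp : 0 < p) (hq : 0 < q) :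
    Real.exp (-(1 / 2) * renyiBer p q) = √(1 - p) * √(1 - q) + √p * √q := by
  rw [renyiBer, ← mul_assoc, show -(1 / 2) * -2 = (1 : ℝ) by norm_num, one_mul,
    Real.exp_log (by positivity)]

lemma sum_sqrt_bern_ite (P Q : Prop) [Decidable P] [Decidable Q] {p q : ℝ}
    (hp : 0 < p ∧ p < 1) (hq : 0 < q ∧ q < 1) :
    ∑ x, √(bern (if P then p else q) x * bern (if Q then p else q) x) =
      if P ↔ Q then 1 else Real.exp (-(1 / 2) * renyiBer p q) := by
  by_cases hP : P <;> by_cases hQ : Q <;>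
    simp only [hP, hQ, if_true, if_false, iff_self, iff_false, false_iff, not_true]
  · exact sum_sqrt_bern_mul_self hp.1.le hp.2.le
  · rw [sum_sqrt_bern_mul_bern hp.1.le hp.2.le, exp_neg_half_renyiBer hp.1 hq.1]
  · rw [sum_sqrt_bern_mul_bern hq.1.le hq.2.le, exp_neg_half_renyiBer hp.1 hq.1]
    ring
  · exact sum_sqrt_bern_mul_self hq.1.le hq.2.le

section TwoLabels

variable {N : ℕ}

lemma hamming_add_hamming_swap (w z : Fin N → Fin 2) :
    hamming w z + hamming w (fun i => Equiv.swap (0 : Fin 2) 1 (z i)) = N := by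
  have hswap : ∀ a b : Fin 2, a ≠ Equiv.swap 0 1 b ↔ ¬a ≠ b := by decide
  simp only [hamming, hswap]
  rw [card_filter_add_card_filter_not, card_univ, Fintype.card_fin]

lemma dACE_le_half (w z : Fin N → Fin 2) : dACE w z ≤ N / 2 := by
  have := hamming_add_hamming_swap w z
  unfold dACE
  omega

lemma dACE_mul_sub_dACE (w z : Fin N → Fin 2) :
    dACE w z * (N - dACE w z) = hamming w z * (N - hamming w z) := by
  have hsum := hamming_add_hamming_swap w z
  unfold dACE
  generalize hamming w z = a, hamming w (fun i => Equiv.swap (0 : Fin 2) 1 (z i)) = b at hsum ⊢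
  subst hsum
  rcases le_total a b with h | h
  · rw [min_eq_left h]
  · rw [min_eq_right h, Nat.add_sub_cancel, Nat.add_sub_cancel_left, mul_comm]

lemma card_hamming_eq_le_choose (z : Fin N → Fin 2) (m : ℕ) :
    #{w | hamming w z = m} ≤ N.choose m := by
  have hdet : ∀ a b c : Fin 2, a ≠ c → b ≠ c → a = b := by decide
  calc #{w | hamming w z = m}
      ≤ #(powersetCard m (univ : Finset (Fin N))) := by
        refine card_le_card_of_injOn (fun w => ({i | w i ≠ z i} : Finset (Fin N)))
          (fun w hw => ?_) fun w₁ _ w₂ _ h => ?_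
        · simpa [mem_powersetCard, hamming] using hw
        · funext i
          have hi := Finset.ext_iff.1 h i
          simp only [mem_filter, mem_univ, true_and] at hi
          by_cases h₁ : w₁ i = z i
          · rw [h₁, not_not.1 (mt hi.2 (not_not.2 h₁))]
          · exact hdet _ _ _ h₁ (hi.1 h₁)
    _ = N.choose m := by rw [card_powersetCard, card_univ, Fintype.card_fin]

lemma card_dACE_eq_le (z : Fin N → Fin 2) {k : ℕ} (hk : k ≤ N) :
    #{w | dACE w z = k} ≤ 2 * N.choose k := by
  have hsub : ({w | dACE w z = k} : Finset (Fin N → Fin 2)) ⊆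
      ({w | hamming w z = k} : Finset _) ∪ ({w | hamming w z = N - k} : Finset _) := by
    intro w hw
    have := hamming_add_hamming_swap w z
    simp only [mem_union, mem_filter_univ] at hw ⊢
    unfold dACE at hw
    omega
  calc #{w | dACE w z = k}
      ≤ #{w | hamming w z = k} + #{w | hamming w z = N - k} :=
        (card_le_card hsub).trans (card_union_le _ _)
    _ ≤ N.choose k + N.choose (N - k) :=
        add_le_add (card_hamming_eq_le_choose z k) (card_hamming_eq_le_choose z (N - k))
    _ = 2 * N.choose k := by rw [Nat.choose_symm hk, two_mul]

lemma sum_filter_lt_dACE_le (z : Fin N → Fin 2) (r : ℕ) {f : ℕ → ℝ}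
    (hf : ∀ k, 0 ≤ f k) :
    ∑ w with r < dACE w z, f (dACE w z) ≤ 2 * ∑ k ∈ Ioc r (N / 2), N.choose k * f k := by
  have hmaps : ∀ w ∈ ({w | r < dACE w z} : Finset _), dACE w z ∈ Ioc r (N / 2) := fun w hw =>
    mem_Ioc.2 ⟨(mem_filter.1 hw).2, dACE_le_half w z⟩
  rw [← sum_fiberwise_of_maps_to hmaps, mul_sum]
  refine sum_le_sum fun k hk => ?_
  have hkN : k ≤ N := (mem_Ioc.1 hk).2.trans (Nat.div_le_self N 2)
  rw [sum_congr rfl fun w hw => by rw [(mem_filter.1 hw).2], sum_const, nsmul_eq_mul, ← mul_assoc]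
  gcongr
  · exact hf k
  calc (#{w ∈ {w | r < dACE w z} | dACE w z = k} : ℝ) ≤ #{w | dACE w z = k} := by
        exact_mod_cast card_le_card (filter_subset_filter _ (filter_subset _ _))
    _ ≤ 2 * N.choose k := by exact_mod_cast card_dACE_eq_le z hkN

lemma card_pairIdx_separated (s : Finset (Fin N)) :
    #{e : PairIdx N | (e.1.1 ∈ s ↔ e.1.2 ∉ s)} = #s * #sᶜ := by
  rw [← card_product]
  refine card_bij' (fun e _ => if e.1.1 ∈ s then e.1 else e.1.swap)
    (fun a ha => ⟨(min a.1 a.2, max a.1 a.2), min_lt_max.2 ?_⟩) ?_ ?_ ?_ ?_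
  · simp only [mem_product, mem_compl] at ha
    exact fun h => ha.2 (h ▸ ha.1)
  · intro e he
    simp only [mem_filter, mem_univ, true_and] at he
    split_ifs with h
    · exact mem_product.2 ⟨h, mem_compl.2 (he.1 h)⟩
    · exact mem_product.2 ⟨not_not.1 (mt he.2 h), mem_compl.2 h⟩
  · intro a ha
    simp only [mem_product, mem_compl] at ha
    simp only [mem_filter, mem_univ, true_and]
    rcases le_total a.1 a.2 with h | h <;> simp [h, ha]
  · intro e _
    obtain ⟨⟨i, j⟩, hij⟩ := e
    split_ifs with h <;> simp [hij.le]
  · intro a ha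
    simp only [mem_product, mem_compl] at ha
    rcases le_total a.1 a.2 with h | h <;> simp [h, ha]

lemma card_disagreeing_pairs (z w : Fin N → Fin 2) :
    #{e : PairIdx N | ¬((z e.1.1 = z e.1.2) ↔ (w e.1.1 = w e.1.2))} =
      dACE w z * (N - dACE w z) := by
  have hsep : ∀ a b c d : Fin 2, ¬((a = b) ↔ (c = d)) ↔ (c ≠ a ↔ ¬d ≠ b) := by decide
  have hcount := card_pairIdx_separated ({i | w i ≠ z i} : Finset (Fin N))
  rw [card_compl, Fintype.card_fin] at hcount
  simpa only [hsep, dACE_mul_sub_dACE, hamming, mem_filter, mem_univ, true_and] using hcount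

end TwoLabels

section SBM

variable {N T : ℕ} {p q : Fin T → ℝ}

lemma sbmDensity_nonneg (hp : ∀ t, 0 < p t ∧ p t < 1) (hq : ∀ t, 0 < q t ∧ q t < 1)
    (z : Fin N → Fin 2) (X : PairIdx N → Fin T → Bool) : 0 ≤ sbmDensity z p q X :=
  prod_nonneg fun _ _ => prod_nonneg fun t _ => bern_ite_nonneg _ (hp t) (hq t) _

theorem sum_sqrt_sbmDensity_mul (hp : ∀ t, 0 < p t ∧ p t < 1) (hq : ∀ t, 0 < q t ∧ q t < 1)
    (z w : Fin N → Fin 2) :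
    ∑ X, √(sbmDensity z p q X * sbmDensity w p q X) =
      Real.exp (-(1 / 2) * ∑ t, renyiBer (p t) (q t)) ^ (dACE w z * (N - dACE w z)) := by
  have hbern : ∀ (u : Fin N → Fin 2) (e : PairIdx N) (t : Fin T) (x : Bool),
      0 ≤ bern (if u e.1.1 = u e.1.2 then p t else q t) x := fun _ _ t _ =>
    bern_ite_nonneg _ (hp t) (hq t) _
  calc ∑ X, √(sbmDensity z p q X * sbmDensity w p q X)
      = ∑ X : PairIdx N → Fin T → Bool, ∏ e, ∏ t,
          √(bern (if z e.1.1 = z e.1.2 then p t else q t) (X e t) *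
            bern (if w e.1.1 = w e.1.2 then p t else q t) (X e t)) := by
        refine sum_congr rfl fun X _ => ?_
        simp_rw [sbmDensity, ← prod_mul_distrib]
        rw [Real.sqrt_prod _ fun e _ => prod_nonneg fun t _ =>
          mul_nonneg (hbern z e t _) (hbern w e t _)]
        exact prod_congr rfl fun e _ => Real.sqrt_prod _ fun t _ =>
          mul_nonneg (hbern z e t _) (hbern w e t _)
    _ = ∏ e : PairIdx N, ∏ t, ∑ x,
          √(bern (if z e.1.1 = z e.1.2 then p t else q t) x *
            bern (if w e.1.1 = w e.1.2 then p t else q t) x) :=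
        sum_prod_prod_eq_prod_prod_sum fun (e : PairIdx N) (t : Fin T) (x : Bool) =>
          √(bern (if z e.1.1 = z e.1.2 then p t else q t) x *
            bern (if w e.1.1 = w e.1.2 then p t else q t) x)
    _ = ∏ e : PairIdx N, if (z e.1.1 = z e.1.2 ↔ w e.1.1 = w e.1.2) then 1 else
          Real.exp (-(1 / 2) * ∑ t, renyiBer (p t) (q t)) := by
        simp_rw [sum_sqrt_bern_ite _ _ (hp _) (hq _), prod_ite_irrel, prod_const_one,
          mul_sum, Real.exp_sum]
    _ = _ := by rw [prod_ite, prod_const_one, one_mul, prod_const, card_disagreeing_pairs]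

end SBM

/-- For the two-block multilayer SBM with uniform prior on labelings, the expected
posterior mass outside the ball of absolute classification error `r` around the true
labeling `z` satisfies
`Err_z(r) ≤ 2 Σ_{r < k ≤ N/2} C(N,k) exp(−(1/2) I_T (N−k) k)`. -/
theorem stmt11 (N T : ℕ) (p q : Fin T → ℝ)
    (hp : ∀ t, 0 < p t ∧ p t < 1) (hq : ∀ t, 0 < q t ∧ q t < 1)
    (z : Fin N → Fin 2) (r : ℕ) :
    ∑ X : PairIdx N → Fin T → Bool, sbmDensity z p q X *
        ((∑ w ∈ Finset.univ.filter (fun w : Fin N → Fin 2 => r < dACE w z),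
            ((2 : ℝ) ^ N)⁻¹ * sbmDensity w p q X) /
          (∑ w' : Fin N → Fin 2, ((2 : ℝ) ^ N)⁻¹ * sbmDensity w' p q X)) ≤
      2 * ∑ k ∈ Finset.Ioc r (N / 2), (N.choose k : ℝ) *
        Real.exp (-(1 / 2) * (∑ t, renyiBer (p t) (q t)) * ((N : ℝ) - k) * k) := by
  have hprior : (0 : ℝ) < ((2 : ℝ) ^ N)⁻¹ := by positivity
  calc _ ≤ ∑ w with r < dACE w z, √(((2 : ℝ) ^ N)⁻¹ / ((2 : ℝ) ^ N)⁻¹) *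
          ∑ X, √(sbmDensity z p q X * sbmDensity w p q X) :=
        sum_mul_posterior_le (fun w => sbmDensity w p q) (fun _ => ((2 : ℝ) ^ N)⁻¹)
          (fun w => sbmDensity_nonneg hp hq w) (fun _ => hprior.le) hprior _
    _ = ∑ w with r < dACE w z,
          Real.exp (-(1 / 2) * (∑ t, renyiBer (p t) (q t)) * ((N : ℝ) - dACE w z) * dACE w z) := by
        refine sum_congr rfl fun w _ => ?_
        have hd : dACE w z ≤ N := (dACE_le_half w z).trans (Nat.div_le_self N 2)
        rw [div_self hprior.ne', Real.sqrt_one, one_mul, sum_sqrt_sbmDensity_mul hp hq,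
          ← Real.exp_nat_mul]
        push_cast [hd]
        congr 1
        ring
    _ ≤ _ := sum_filter_lt_dACE_le z r (f := fun k : ℕ =>
          Real.exp (-(1 / 2) * (∑ t, renyiBer (p t) (q t)) * ((N : ℝ) - k) * k))
          fun k => (Real.exp_pos _).le
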